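/- arXiv:1412.1950 — 2 statements merged into one kernel-verified Lean document; each statement's English description precedes it below -/
import Mathlib

section
/- If p is an odd prime with p ≡ 5 (mod 9), then 2p is not a cube sum, i.e. there are no nonzero rational numbers a and b with a³ + b³ = 2p. -/
/-!
Descent on `|z|` in `x³ + y³ = 2p z³`. Dividing out common primes (`2p` is cube-free) makes `x, y`
coprime, hence both odd, and `x = r + s`, `y = r - s` turn the equation into
`r (r² + 3s²) = p z³`. Since `-3` is not a square modulo `p ≡ 2 (mod 3)`, `p ∣ r` and `r² + 3s²` is
a cube, so unique factorisation in `ℤ[ω]` gives Euler's parametrisation `r + s√-3 = (m + n√-3)³`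
(when `3 ∣ r`, of `s + (r/3)√-3` instead). Then `r = m (m - 3n) (m + 3n)`
(resp. `r/9 = n (m + n) (m - n)`) is `p` times a cube, with pairwise coprime factors `X, Y, W`
satisfying `Y + W = 2X`. Modulo `9`, `p ≡ 5` rules out `p ∣ Y` and `p ∣ W`; so `X = p c³`,
`Y = d³`, `W = e³`, and `d³ + e³ = 2p c³` with `|c| < |z|`.
-/

/-- A nonzero rational number is a *cube sum* if it is `a³ + b³` for nonzero rationals. -/
def IsCubeSum (r : ℚ) : Prop := ∃ a b : ℚ, a ≠ 0 ∧ b ≠ 0 ∧ a ^ 3 + b ^ 3 = r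

/-- A positive integer is *cube-free* if no cube of a prime divides it. -/
def CubeFree (n : ℕ) : Prop := ∀ p : ℕ, p.Prime → ¬ p ^ 3 ∣ n

/-- `⟨a, b⟩` stands for `a + b ω`, where `ω² + ω + 1 = 0`. -/
@[ext]
structure EisensteinInt where
  a : ℤ
  b : ℤ

namespace EisensteinInt

instance : Zero EisensteinInt := ⟨⟨0, 0⟩⟩
instance : One EisensteinInt := ⟨⟨1, 0⟩⟩
instance : Add EisensteinInt := ⟨fun x y => ⟨x.a + y.a, x.b + y.b⟩⟩
instance : Neg EisensteinInt := ⟨fun x => ⟨-x.a, -x.b⟩⟩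
instance : Mul EisensteinInt :=
  ⟨fun x y => ⟨x.a * y.a - x.b * y.b, x.a * y.b + x.b * y.a - x.b * y.b⟩⟩

@[simp] lemma zero_a : (0 : EisensteinInt).a = 0 := rfl
@[simp] lemma zero_b : (0 : EisensteinInt).b = 0 := rfl
@[simp] lemma one_a : (1 : EisensteinInt).a = 1 := rfl
@[simp] lemma one_b : (1 : EisensteinInt).b = 0 := rfl
@[simp] lemma add_a (x y : EisensteinInt) : (x + y).a = x.a + y.a := rfl
@[simp] lemma add_b (x y : EisensteinInt) : (x + y).b = x.b + y.b := rfl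
@[simp] lemma neg_a (x : EisensteinInt) : (-x).a = -x.a := rfl
@[simp] lemma neg_b (x : EisensteinInt) : (-x).b = -x.b := rfl
@[simp] lemma mul_a (x y : EisensteinInt) : (x * y).a = x.a * y.a - x.b * y.b := rfl
@[simp] lemma mul_b (x y : EisensteinInt) : (x * y).b = x.a * y.b + x.b * y.a - x.b * y.b := rfl

instance : CommRing EisensteinInt where
  add_assoc _ _ _ := by ext <;> simp [add_assoc]
  zero_add _ := by ext <;> simp
  add_zero _ := by ext <;> simp
  add_comm _ _ := by ext <;> simp [add_comm]
  mul_assoc _ _ _ := by ext <;> simp <;> ring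
  one_mul _ := by ext <;> simp
  mul_one _ := by ext <;> simp
  left_distrib _ _ _ := by ext <;> simp <;> ring
  right_distrib _ _ _ := by ext <;> simp <;> ring
  mul_comm _ _ := by ext <;> simp <;> ring
  zero_mul _ := by ext <;> simp
  mul_zero _ := by ext <;> simp
  neg_add_cancel _ := by ext <;> simp
  natCast n := ⟨n, 0⟩
  natCast_zero := rfl
  natCast_succ _ := by ext <;> simp
  intCast n := ⟨n, 0⟩
  intCast_ofNat _ := rfl
  intCast_negSucc n := by
    ext
    · change Int.negSucc n = -((n + 1 : ℕ) : ℤ)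
      simp [Int.negSucc_eq]
    · exact neg_zero.symm
  nsmul := nsmulRec
  zsmul := zsmulRec

@[simp] lemma sub_a (x y : EisensteinInt) : (x - y).a = x.a - y.a := (sub_eq_add_neg x.a y.a).symm
@[simp] lemma sub_b (x y : EisensteinInt) : (x - y).b = x.b - y.b := (sub_eq_add_neg x.b y.b).symm
@[simp] lemma intCast_a (n : ℤ) : (n : EisensteinInt).a = n := rfl
@[simp] lemma intCast_b (n : ℤ) : (n : EisensteinInt).b = 0 := rfl
@[simp] lemma ofNat_a (n : ℕ) [n.AtLeastTwo] :
    (no_index (OfNat.ofNat n : EisensteinInt)).a = OfNat.ofNat n := rfl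
@[simp] lemma ofNat_b (n : ℕ) [n.AtLeastTwo] :
    (no_index (OfNat.ofNat n : EisensteinInt)).b = 0 := rfl


def norm (x : EisensteinInt) : ℤ := x.a ^ 2 - x.a * x.b + x.b ^ 2

def conj (x : EisensteinInt) : EisensteinInt := ⟨x.a - x.b, -x.b⟩

lemma norm_mul (x y : EisensteinInt) : norm (x * y) = norm x * norm y := by
  simp only [norm, mul_a, mul_b]; ring

lemma norm_conj (x : EisensteinInt) : norm (conj x) = norm x := by
  simp only [norm, conj]; ring

lemma mul_conj (x : EisensteinInt) : x * conj x = norm x := by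
  ext <;> simp only [mul_a, mul_b, intCast_a, intCast_b, conj, norm] <;> ring

lemma four_mul_norm (x : EisensteinInt) : 4 * norm x = (2 * x.a - x.b) ^ 2 + 3 * x.b ^ 2 := by
  unfold norm; ring

lemma norm_nonneg (x : EisensteinInt) : 0 ≤ norm x := by
  nlinarith [four_mul_norm x, sq_nonneg (2 * x.a - x.b), sq_nonneg x.b]

lemma norm_pos {x : EisensteinInt} (hx : x ≠ 0) : 0 < norm x := by
  by_cases hb : x.b = 0
  · have ha : x.a ≠ 0 := fun ha => hx (EisensteinInt.ext ha hb)
    nlinarith [four_mul_norm x, sq_pos_of_ne_zero ha]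
  · nlinarith [four_mul_norm x, sq_pos_of_ne_zero hb, sq_nonneg (2 * x.a - x.b)]

lemma four_mul_norm_le {x : EisensteinInt} {d : ℤ} (ha : 2 * |x.a| ≤ d) (hb : 2 * |x.b| ≤ d) :
    4 * norm x ≤ 3 * d ^ 2 := by
  unfold norm
  nlinarith [abs_mul_abs_self x.a, abs_mul_abs_self x.b, neg_abs_le (x.a * x.b), abs_mul x.a x.b,
    abs_nonneg x.a, abs_nonneg x.b, mul_le_mul ha hb (by positivity) (by linarith [abs_nonneg x.a])]

/-- `n / d` rounded to a nearest integer, for `0 < d`. -/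
def roundDiv (n d : ℤ) : ℤ := (2 * n + d) / (2 * d)

lemma two_mul_abs_sub_roundDiv_mul_le (n : ℤ) {d : ℤ} (hd : 0 < d) :
    2 * |n - roundDiv n d * d| ≤ d := by
  have h := Int.emod_add_mul_ediv (2 * n + d) (2 * d)
  have h₀ := Int.emod_nonneg (2 * n + d) (by omega : 2 * d ≠ 0)
  have h₁ := Int.emod_lt_of_pos (2 * n + d) (by omega : 0 < 2 * d)
  set r := (2 * n + d) % (2 * d)
  have : 2 * |n - roundDiv n d * d| = |r - d| := by
    rw [← abs_two, ← abs_mul, roundDiv]; congr 1; linarith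
  rw [this, abs_le]
  constructor <;> linarith

def quo (x y : EisensteinInt) : EisensteinInt :=
  ⟨roundDiv (x * conj y).a (norm y), roundDiv (x * conj y).b (norm y)⟩

lemma norm_sub_mul_quo_lt (x : EisensteinInt) {y : EisensteinInt} (hy : y ≠ 0) :
    norm (x - y * quo x y) < norm y := by
  have hd := norm_pos hy
  have key : (x - y * quo x y) * conj y = x * conj y - quo x y * (norm y : EisensteinInt) := by
    rw [← mul_conj]; ring
  have hle : 4 * (norm (x - y * quo x y) * norm y) ≤ 3 * norm y ^ 2 := by
    rw [← norm_conj y, ← norm_mul, norm_conj, key]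
    apply four_mul_norm_le <;> simpa [quo] using two_mul_abs_sub_roundDiv_mul_le _ hd
  nlinarith

instance : EuclideanDomain EisensteinInt where
  exists_pair_ne := ⟨0, 1, by simp [EisensteinInt.ext_iff]⟩
  quotient := quo
  quotient_zero x := by ext <;> simp [quo, roundDiv, norm]
  remainder x y := x - y * quo x y
  quotient_mul_add_remainder_eq _ _ := add_sub_cancel _ _
  r := InvImage (· < ·) fun x => (norm x).toNat
  r_wellFounded := InvImage.wf _ wellFounded_lt
  remainder_lt x y hy := by
    have := norm_sub_mul_quo_lt x hy
    have := norm_nonneg (x - y * quo x y)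
    show (norm _).toNat < (norm y).toNat
    omega
  mul_left_not_lt x y hy := by
    show ¬ (norm (x * y)).toNat < (norm x).toNat
    rw [norm_mul, not_lt]
    exact Int.toNat_le_toNat (le_mul_of_one_le_right (norm_nonneg x) (norm_pos hy))

lemma isUnit_iff_norm_eq_one {x : EisensteinInt} : IsUnit x ↔ norm x = 1 := by
  refine ⟨fun ⟨u, hu⟩ => ?_, fun h => .of_mul_eq_one (conj x) (by rw [mul_conj, h]; rfl)⟩
  have := congrArg norm u.mul_inv
  rw [norm_mul, hu] at this
  exact Int.eq_one_of_mul_eq_one_right (norm_nonneg x) this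

lemma two_dvd_iff {x : EisensteinInt} : 2 ∣ x ↔ 2 ∣ x.a ∧ 2 ∣ x.b := by
  refine ⟨fun ⟨c, hc⟩ => by simp [hc], fun ⟨⟨k, hk⟩, ⟨l, hl⟩⟩ => ⟨⟨k, l⟩, ?_⟩⟩
  ext <;> simp [hk, hl]

lemma eq_one_or_eq_neg_one_of_two_dvd_sub_one {ε : EisensteinInt} (hε : IsUnit ε) (h : 2 ∣ ε - 1) :
    ε = 1 ∨ ε = -1 := by
  obtain ⟨x, y⟩ := ε
  have hn : x ^ 2 - x * y + y ^ 2 = 1 := isUnit_iff_norm_eq_one.1 hε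
  rw [two_dvd_iff] at h
  simp only [sub_a, sub_b, one_a, one_b] at h
  have : -1 ≤ x := by nlinarith [sq_nonneg (2 * y - x)]
  have : x ≤ 1 := by nlinarith [sq_nonneg (2 * y - x)]
  have : -1 ≤ y := by nlinarith [sq_nonneg (2 * x - y)]
  have : y ≤ 1 := by nlinarith [sq_nonneg (2 * x - y)]
  interval_cases x <;> interval_cases y <;> simp_all [EisensteinInt.ext_iff]

-- `ℤ[ω] / 2` is the field `𝔽₄`, whose unit group has order `3`.
lemma two_dvd_pow_three_sub_one {x : EisensteinInt} (h : ¬ 2 ∣ x) : 2 ∣ x ^ 3 - 1 := by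
  rw [two_dvd_iff] at *
  simp only [pow_three', ← even_iff_two_dvd, sub_a, sub_b, mul_a, mul_b, one_a, one_b] at *
  simp [parity_simps, ← Int.not_even_iff_odd]
  tauto

lemma exists_pow_three_eq_of_associated {ξ α : EisensteinInt} (hξ : 2 ∣ ξ - 1)
    (h : Associated (α ^ 3) ξ) : ∃ β, β ^ 3 = ξ := by
  obtain ⟨u, rfl⟩ := h
  have hα : ¬ 2 ∣ α := fun hα => by
    have : (2 : EisensteinInt) ∣ 1 := by
      simpa using dvd_sub ((dvd_pow hα three_ne_zero).mul_right (u : EisensteinInt)) hξ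
    simp [two_dvd_iff] at this
  have hu : 2 ∣ (u : EisensteinInt) - 1 := by
    have := dvd_sub hξ ((two_dvd_pow_three_sub_one hα).mul_right u)
    rwa [show α ^ 3 * u - 1 - (α ^ 3 - 1) * u = (u : EisensteinInt) - 1 by ring] at this
  rcases eq_one_or_eq_neg_one_of_two_dvd_sub_one u.isUnit hu with hu | hu
  · exact ⟨α, by rw [hu, mul_one]⟩
  · exact ⟨-α, by rw [hu]; ring⟩

def ω : EisensteinInt := ⟨0, 1⟩

lemma ω_pow_three : ω ^ 3 = 1 := by
  ext <;> simp [ω, pow_three']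

lemma exists_pow_three_eq_pow_three_and_two_dvd_b (β : EisensteinInt) :
    ∃ γ : EisensteinInt, γ ^ 3 = β ^ 3 ∧ 2 ∣ γ.b := by
  by_cases hb : 2 ∣ β.b
  · exact ⟨β, rfl, hb⟩
  by_cases ha : 2 ∣ β.a
  · exact ⟨ω ^ 2 * β, by rw [mul_pow, ← pow_mul, pow_mul', ω_pow_three, one_pow, one_mul],
      by simpa [ω, sq] using ha⟩
  · exact ⟨ω * β, by rw [mul_pow, ω_pow_three, one_mul], by simp [ω]; omega⟩

lemma isCoprime_conj {S T : ℤ} (hST : IsCoprime S T) (h6 : IsCoprime 6 (S ^ 2 + 3 * T ^ 2)) :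
    IsCoprime (⟨S + T, 2 * T⟩ : EisensteinInt) (conj ⟨S + T, 2 * T⟩) := by
  obtain ⟨u, w, huw⟩ := hST
  obtain ⟨i, j, hij⟩ := h6
  set ξ : EisensteinInt := ⟨S + T, 2 * T⟩
  -- `6 = 3u (ξ + ξ̄) - w √-3 (ξ - ξ̄)`, as `ξ = S + T √-3` and `√-3 = 1 + 2ω`
  have hsix : (⟨3 * u - w, -2 * w⟩ : EisensteinInt) * ξ + ⟨3 * u + w, 2 * w⟩ * conj ξ = 6 := by
    ext <;> simp [ξ, conj]
    · linear_combination 6 * huw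
    · ring
  have hnorm : ξ * conj ξ = ((S ^ 2 + 3 * T ^ 2 : ℤ) : EisensteinInt) := by
    rw [mul_conj]; congr 1; simp only [ξ, norm]; ring
  have hij' := congrArg (Int.cast : ℤ → EisensteinInt) hij
  push_cast at hij' hnorm
  refine ⟨i * ⟨3 * u - w, -2 * w⟩ + j * conj ξ, i * ⟨3 * u + w, 2 * w⟩, ?_⟩
  linear_combination (i : EisensteinInt) * hsix + (j : EisensteinInt) * hnorm + hij'

end EisensteinInt

lemma isCoprime_of_isCoprime_cube_coeffs {S T m n : ℤ} (hST : IsCoprime S T)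
    (hS : S = m ^ 3 - 9 * m * n ^ 2) (hT : T = 3 * m ^ 2 * n - 3 * n ^ 3) : IsCoprime m n := by
  rw [show S = m * (m ^ 2 - 9 * n ^ 2) by rw [hS]; ring,
    show T = n * (3 * m ^ 2 - 3 * n ^ 2) by rw [hT]; ring] at hST
  exact hST.of_mul_left_left.of_mul_right_left

lemma odd_add_of_isCoprime_cube_coeffs {S T m n : ℤ} (hST : IsCoprime S T)
    (hS : S = m ^ 3 - 9 * m * n ^ 2) (hT : T = 3 * m ^ 2 * n - 3 * n ^ 3) : Odd (m + n) := by
  by_contra hmn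
  rw [Int.not_odd_iff_even] at hmn
  have h2S : 2 ∣ S := by
    rw [← even_iff_two_dvd, hS]
    simp [parity_simps, show ¬ Even (9 : ℤ) by decide] at hmn ⊢
    tauto
  have h2T : 2 ∣ T := by
    rw [← even_iff_two_dvd, hT]
    simp [parity_simps, show ¬ Even (3 : ℤ) by decide] at hmn ⊢
    tauto
  exact Int.prime_two.not_isUnit (hST.isUnit_of_dvd' h2S h2T)

lemma isCoprime_six_of_sq_add_three_mul_sq_eq_cube {S T v : ℤ} (hST : IsCoprime S T)
    (hodd : Odd (S + T)) (h : S ^ 2 + 3 * T ^ 2 = v ^ 3) : IsCoprime 6 (S ^ 2 + 3 * T ^ 2) := by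
  refine (show (6 : ℤ) = 2 * 3 by norm_num) ▸ IsCoprime.mul_left ?_ ?_
  · rw [Int.prime_two.coprime_iff_not_dvd, ← even_iff_two_dvd]
    rw [← Int.not_even_iff_odd] at hodd
    simp [parity_simps] at hodd ⊢
    tauto
  · rw [Int.prime_three.coprime_iff_not_dvd]
    intro h3
    have h27 : 27 ∣ S ^ 2 + 3 * T ^ 2 := by
      obtain ⟨k, rfl⟩ := Int.prime_three.dvd_of_dvd_pow (h ▸ h3)
      exact h ▸ ⟨k ^ 3, by ring⟩
    have h3S : 3 ∣ S := Int.prime_three.dvd_of_dvd_pow (n := 2) (by omega)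
    obtain ⟨k, rfl⟩ := h3S
    have h3T : 3 ∣ T := Int.prime_three.dvd_of_dvd_pow (n := 2) (by ring_nf at h27; omega)
    exact Int.prime_three.not_isUnit (hST.isUnit_of_dvd' (dvd_mul_right 3 k) h3T)

-- Euler's parametrisation `S + T√-3 = (m + n√-3)³`, computed in `ℤ[ω]` where `√-3 = 1 + 2ω`.
open EisensteinInt in
theorem exists_eq_of_sq_add_three_mul_sq_eq_cube {S T v : ℤ} (hST : IsCoprime S T)
    (hodd : Odd (S + T)) (h : S ^ 2 + 3 * T ^ 2 = v ^ 3) :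
    ∃ m n : ℤ, IsCoprime m n ∧ Odd (m + n) ∧
      S = m ^ 3 - 9 * m * n ^ 2 ∧ T = 3 * m ^ 2 * n - 3 * n ^ 3 := by
  set ξ : EisensteinInt := ⟨S + T, 2 * T⟩
  have hprod : ξ * conj ξ = (v : EisensteinInt) ^ 3 := by
    rw [mul_conj, ← Int.cast_pow, ← h]
    congr 1
    show (S + T) ^ 2 - (S + T) * (2 * T) + (2 * T) ^ 2 = _
    ring
  obtain ⟨α, hα⟩ := exists_associated_pow_of_mul_eq_pow'
    (isCoprime_conj hST (isCoprime_six_of_sq_add_three_mul_sq_eq_cube hST hodd h)) hprod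
  have hξ : 2 ∣ ξ - 1 := by
    obtain ⟨k, hk⟩ := hodd
    exact two_dvd_iff.2 ⟨⟨k, by simp [ξ, hk]⟩, ⟨T, by simp [ξ]⟩⟩
  obtain ⟨β, hβ⟩ := exists_pow_three_eq_of_associated hξ hα
  obtain ⟨γ, hγ, n, hn⟩ := exists_pow_three_eq_pow_three_and_two_dvd_b β
  have hA := congrArg EisensteinInt.a (hγ.trans hβ)
  have hB := congrArg EisensteinInt.b (hγ.trans hβ)
  simp only [pow_three', mul_a, mul_b, hn, ξ] at hA hB
  have hS : S = (γ.a - n) ^ 3 - 9 * (γ.a - n) * n ^ 2 := by linarith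
  have hT : T = 3 * (γ.a - n) ^ 2 * n - 3 * n ^ 3 := by linarith
  exact ⟨_, _, isCoprime_of_isCoprime_cube_coeffs hST hS hT,
    odd_add_of_isCoprime_cube_coeffs hST hS hT, hS, hT⟩

lemma ZMod.mod_three_eq_one_of_sq_add_self_add_one_eq_zero {p : ℕ} [Fact p.Prime] (hp3 : p ≠ 3)
    {ζ : ZMod p} (h : ζ ^ 2 + ζ + 1 = 0) : p % 3 = 1 := by
  have hζ3 : ζ ^ 3 = 1 := by linear_combination (ζ - 1) * h
  have hζ1 : ζ ≠ 1 := by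
    rintro rfl
    have : ((3 : ℕ) : ZMod p) = 0 := by push_cast; linear_combination h
    rw [ZMod.natCast_eq_zero_iff] at this
    exact hp3 ((Nat.prime_dvd_prime_iff_eq Fact.out Nat.prime_three).1 this)
  have hζ0 : ζ ≠ 0 := by rintro rfl; norm_num at hζ3
  have : Fact (Nat.Prime 3) := ⟨Nat.prime_three⟩
  have := ZMod.orderOf_dvd_card_sub_one hζ0
  rw [orderOf_eq_prime hζ3 hζ1] at this
  have := (Fact.out : p.Prime).two_le
  omega

lemma Int.not_prime_dvd_sq_add_three_mul_sq {p : ℕ} (hp : p.Prime) (hodd : Odd p) (hp3 : p % 3 = 2)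
    {S T : ℤ} (hST : IsCoprime S T) : ¬ (p : ℤ) ∣ S ^ 2 + 3 * T ^ 2 := by
  have := Fact.mk hp
  intro hdvd
  have h0 : (S : ZMod p) ^ 2 + 3 * (T : ZMod p) ^ 2 = 0 := by
    exact_mod_cast (ZMod.intCast_zmod_eq_zero_iff_dvd _ p).2 hdvd
  have hT : (T : ZMod p) ≠ 0 := by
    intro hT
    have hS : (S : ZMod p) = 0 := by simpa [hT] using h0
    rw [ZMod.intCast_zmod_eq_zero_iff_dvd] at hS hT
    exact (Nat.prime_iff_prime_int.1 hp).not_isUnit (hST.isUnit_of_dvd' hS hT)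
  have h2 : (2 : ZMod p) ≠ 0 := by
    intro h2
    have : ((2 : ℕ) : ZMod p) = 0 := by exact_mod_cast h2
    rw [ZMod.natCast_eq_zero_iff, Nat.prime_dvd_prime_iff_eq hp Nat.prime_two] at this
    subst this
    exact absurd hodd (by decide)
  -- `(S - T) / 2T` is a primitive cube root of unity
  have := ZMod.mod_three_eq_one_of_sq_add_self_add_one_eq_zero (p := p) (by omega)
    (ζ := ((S : ZMod p) - (T : ZMod p)) / (2 * (T : ZMod p))) (by field_simp; linear_combination h0)
  omega

lemma IsCoprime.sub_add {R : Type*} [CommRing R] {a b : R} (h : IsCoprime a b)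
    (hodd : Odd (a + b)) : IsCoprime (a - b) (a + b) := by
  obtain ⟨u, v, huv⟩ := h
  obtain ⟨k, hk⟩ := hodd
  exact ⟨-k * (u - v), 1 - k * (u + v), by linear_combination hk - 2 * k * huv⟩

lemma Int.exists_cubes_of_mul_mul_eq_cube {X Y W w : ℤ} (hXY : IsCoprime X Y)
    (hXW : IsCoprime X W) (hYW : IsCoprime Y W) (h : X * Y * W = w ^ 3) :
    (∃ c, X = c ^ 3) ∧ (∃ d, Y = d ^ 3) ∧ ∃ e, W = e ^ 3 := by
  rw [mul_assoc] at h
  obtain ⟨f, hf⟩ := Int.eq_pow_of_mul_eq_pow_odd_right (hXY.mul_right hXW) (by decide) h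
  exact ⟨Int.eq_pow_of_mul_eq_pow_odd_left (hXY.mul_right hXW) (by decide) h,
    Int.eq_pow_of_mul_eq_pow_odd_left hYW (by decide) hf,
    Int.eq_pow_of_mul_eq_pow_odd_right hYW (by decide) hf⟩

lemma Int.eq_of_pow_three_eq {a b : ℤ} (h : a ^ 3 = b ^ 3) : a = b :=
  (Odd.strictMono_pow (by decide)).injective h

lemma Int.exists_eq_mul_of_mul_eq_cube {A B z : ℤ} (hAB : IsCoprime A B) (h : A * B = z ^ 3) :
    ∃ u v, A = u ^ 3 ∧ B = v ^ 3 ∧ z = u * v := by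
  obtain ⟨u, rfl⟩ := Int.eq_pow_of_mul_eq_pow_odd_left hAB (by decide) h
  obtain ⟨v, rfl⟩ := Int.eq_pow_of_mul_eq_pow_odd_right hAB (by decide) h
  exact ⟨u, v, rfl, rfl, Int.eq_of_pow_three_eq (by rw [← h]; ring)⟩

lemma Int.three_dvd_of_mul_cube_add_cube_eq_two_mul_cube {n a b c : ℤ} (hn : n % 9 = 5)
    (h : n * c ^ 3 + b ^ 3 = 2 * a ^ 3) : 3 ∣ b ∧ 3 ∣ c := by
  -- cubes are `0, ±1` modulo `9`
  have key : ∀ a b c : ZMod 9, 5 * c ^ 3 + b ^ 3 = 2 * a ^ 3 → 3 * b = 0 ∧ 3 * c = 0 := by decide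
  have h9 := congrArg (Int.cast : ℤ → ZMod 9) h
  push_cast [← ZMod.intCast_mod n, hn] at h9
  obtain ⟨hb, hc⟩ := key _ _ _ h9
  have hb := (ZMod.intCast_zmod_eq_zero_iff_dvd (3 * b) 9).1 (by exact_mod_cast hb)
  have hc := (ZMod.intCast_zmod_eq_zero_iff_dvd (3 * c) 9).1 (by exact_mod_cast hc)
  omega

lemma Nat.Prime.cubeFree_two_mul {p : ℕ} (hp : p.Prime) (hodd : Odd p) : CubeFree (2 * p) := by
  intro q hq hdvd
  rcases (Nat.Prime.dvd_mul hq).1 ((dvd_pow_self q three_ne_zero).trans hdvd) with h2 | hqp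
  · rw [(Nat.prime_dvd_prime_iff_eq hq Nat.prime_two).1 h2] at hdvd
    rw [Nat.odd_iff] at hodd
    omega
  · rw [(Nat.prime_dvd_prime_iff_eq hq hp).1 hqp, pow_succ] at hdvd
    have := Nat.le_of_dvd two_pos (Nat.dvd_of_mul_dvd_mul_right hp.pos hdvd)
    nlinarith [hp.two_le]

lemma not_dvd_of_mul_mul_eq_mul_cube {p : ℕ} (hmod : p % 9 = 5) {X Y W w : ℤ} (hXY : IsCoprime X Y)
    (hXW : IsCoprime X W) (hYW : IsCoprime Y W) (hsum : Y + W = 2 * X)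
    (h : X * Y * W = p * w ^ 3) : ¬ (p : ℤ) ∣ Y := by
  rintro ⟨Y', rfl⟩
  have h' : X * Y' * W = w ^ 3 :=
    mul_left_cancel₀ (by omega : (p : ℤ) ≠ 0) (by rw [← h]; ring)
  obtain ⟨⟨a, rfl⟩, ⟨c, rfl⟩, ⟨b, rfl⟩⟩ := Int.exists_cubes_of_mul_mul_eq_cube
    (hXY.of_isCoprime_of_dvd_right (dvd_mul_left _ _)) hXW
    (hYW.of_isCoprime_of_dvd_left (dvd_mul_left _ _)) h'
  obtain ⟨h3b, h3c⟩ := Int.three_dvd_of_mul_cube_add_cube_eq_two_mul_cube (by omega) hsum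
  exact Int.prime_three.not_isUnit (hYW.isUnit_of_dvd'
    ((dvd_pow h3c three_ne_zero).mul_left _) (dvd_pow h3b three_ne_zero))

lemma exists_solution_of_mul_mul_eq_mul_cube {p : ℕ} (hp : p.Prime) (hmod : p % 9 = 5) {X Y W w : ℤ}
    (hXY : IsCoprime X Y) (hXW : IsCoprime X W) (hYW : IsCoprime Y W) (hsum : Y + W = 2 * X)
    (h : X * Y * W = p * w ^ 3) (hw : w ≠ 0) :
    ∃ x y z : ℤ, x ^ 3 + y ^ 3 = 2 * p * z ^ 3 ∧ z ≠ 0 ∧ z.natAbs ≤ w.natAbs := by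
  have hpZ := Nat.prime_iff_prime_int.1 hp
  have hpX : (p : ℤ) ∣ X := by
    rcases hpZ.dvd_mul.1 (h ▸ dvd_mul_right _ _ : (p : ℤ) ∣ X * Y * W) with hpXY | hpW
    · exact (hpZ.dvd_mul.1 hpXY).resolve_right
        (not_dvd_of_mul_mul_eq_mul_cube hmod hXY hXW hYW hsum h)
    · exact absurd hpW (not_dvd_of_mul_mul_eq_mul_cube hmod hXW hXY hYW.symm
        (by rw [← hsum, add_comm]) (by rw [← h]; ring))
  obtain ⟨X', rfl⟩ := hpX
  have h' : X' * Y * W = w ^ 3 :=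
    mul_left_cancel₀ hpZ.ne_zero (by rw [← h]; ring)
  obtain ⟨⟨c, rfl⟩, ⟨d, rfl⟩, ⟨e, rfl⟩⟩ := Int.exists_cubes_of_mul_mul_eq_cube
    (hXY.of_isCoprime_of_dvd_left (dvd_mul_left _ _))
    (hXW.of_isCoprime_of_dvd_left (dvd_mul_left _ _)) hYW h'
  have hw' : w = c * d * e := Int.eq_of_pow_three_eq (by rw [← h']; ring)
  refine ⟨d, e, c, by rw [hsum]; ring, fun hc => by simp [hw', hc] at hw,
    Int.natAbs_le_of_dvd_ne_zero ⟨d * e, by rw [hw']; ring⟩ hw⟩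

lemma Int.natAbs_lt_natAbs_of_eq_mul {z u v : ℤ} (h : z = u * v) (hu : u ≠ 0) (hv : 2 ≤ v.natAbs) :
    u.natAbs < z.natAbs := by
  rw [h, Int.natAbs_mul]
  have := Int.natAbs_pos.2 hu
  nlinarith

lemma exists_smaller_solution_of_not_three_dvd {p : ℕ} (hp : p.Prime) (hodd : Odd p)
    (hmod : p % 9 = 5) {r s z : ℤ} (hrs : IsCoprime r s) (hrs₂ : Odd (r + s)) (hr₃ : ¬ 3 ∣ r)
    (h : r * (r ^ 2 + 3 * s ^ 2) = p * z ^ 3) (hz : z ≠ 0) :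
    ∃ x y z' : ℤ, x ^ 3 + y ^ 3 = 2 * p * z' ^ 3 ∧ z' ≠ 0 ∧ z'.natAbs < z.natAbs := by
  have hpZ := Nat.prime_iff_prime_int.1 hp
  have hpr : (p : ℤ) ∣ r := (hpZ.dvd_mul.1 ⟨_, h⟩).resolve_right
    (Int.not_prime_dvd_sq_add_three_mul_sq hp hodd (by omega) hrs)
  obtain ⟨r₁, hr₁⟩ := hpr
  have h₁ : r₁ * (r ^ 2 + 3 * s ^ 2) = z ^ 3 :=
    mul_left_cancel₀ hpZ.ne_zero (by rw [← h, hr₁]; ring)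
  have hcop : IsCoprime r₁ (r ^ 2 + 3 * s ^ 2) := by
    have h3 : IsCoprime r 3 := (Int.prime_three.coprime_iff_not_dvd.2 hr₃).symm
    have := (h3.mul_right (hrs.pow_right (n := 2))).add_mul_left_right r
    rw [show 3 * s ^ 2 + r * r = r ^ 2 + 3 * s ^ 2 by ring] at this
    exact this.of_isCoprime_of_dvd_left ⟨p, by rw [hr₁]; ring⟩
  obtain ⟨u, v, hu, hv, hzuv⟩ := Int.exists_eq_mul_of_mul_eq_cube hcop h₁
  have hu₀ : u ≠ 0 := by rintro rfl; simp [hzuv] at hz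
  have hv₂ : 2 ≤ v.natAbs := by
    have hr₀ : r ≠ 0 := by simp [hr₁, hu, hp.ne_zero, hu₀]
    have hpr := Int.natAbs_le_of_dvd_ne_zero ⟨r₁, hr₁⟩ hr₀
    rw [Int.natAbs_natCast] at hpr
    have h2r : (2 : ℤ) ≤ r.natAbs := by have := hp.two_le; omega
    have : 1 < v := (Odd.strictMono_pow (R := ℤ) (by decide : Odd 3)).lt_iff_lt.1 (by
      rw [one_pow, ← hv, ← Int.natAbs_sq]
      nlinarith [sq_nonneg s])
    omega
  obtain ⟨m, n, hmn, hmn₂, hrm, -⟩ := exists_eq_of_sq_add_three_mul_sq_eq_cube hrs hrs₂ hv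
  have hm₃ : IsCoprime m 3 := (Int.prime_three.coprime_iff_not_dvd.2
    fun h3 => hr₃ (h3.trans ⟨m ^ 2 - 9 * n ^ 2, by rw [hrm]; ring⟩)).symm
  have hm₃n := hm₃.mul_right hmn
  have hodd₃ : Odd (m + 3 * n) := by
    rw [show m + 3 * n = m + n + 2 * n by ring]; exact hmn₂.add_even (even_two_mul n)
  obtain ⟨x, y, c, hxy, hc, hcu⟩ := exists_solution_of_mul_mul_eq_mul_cube hp hmod (w := u)
    (X := m) (Y := m - 3 * n) (W := m + 3 * n)
    (by simpa [sub_eq_add_neg, add_comm] using hm₃n.neg_right.add_mul_left_right 1)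
    (by simpa [add_comm] using hm₃n.add_mul_left_right 1)
    (hm₃n.sub_add hodd₃) (by ring) (by rw [← hu, ← hr₁, hrm]; ring) hu₀
  exact ⟨x, y, c, hxy, hc, hcu.trans_lt (Int.natAbs_lt_natAbs_of_eq_mul hzuv hu₀ hv₂)⟩

lemma exists_smaller_solution_of_three_dvd {p : ℕ} (hp : p.Prime) (hodd : Odd p)
    (hmod : p % 9 = 5) {s t z : ℤ} (hst : IsCoprime s t) (hst₂ : Odd (s + t)) (hs₃ : ¬ 3 ∣ s)
    (h : 9 * t * (s ^ 2 + 3 * t ^ 2) = p * z ^ 3) (hz : z ≠ 0) :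
    ∃ x y z' : ℤ, x ^ 3 + y ^ 3 = 2 * p * z' ^ 3 ∧ z' ≠ 0 ∧ z'.natAbs < z.natAbs := by
  have hpZ := Nat.prime_iff_prime_int.1 hp
  have hp₉ : ¬ (p : ℤ) ∣ 9 := fun h9 => by
    have := Int.natCast_dvd_natCast.1
      (hpZ.dvd_of_dvd_pow (n := 2) (by norm_num [h9] : (p : ℤ) ∣ 3 ^ 2))
    rw [Nat.prime_dvd_prime_iff_eq hp Nat.prime_three] at this
    omega
  have hpt : (p : ℤ) ∣ t := by
    rcases hpZ.dvd_mul.1 ⟨_, h⟩ with h9t | hQ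
    · exact (hpZ.dvd_mul.1 h9t).resolve_left hp₉
    · exact absurd hQ (Int.not_prime_dvd_sq_add_three_mul_sq hp hodd (by omega) hst)
  obtain ⟨t₁, ht₁⟩ := hpt
  have h₁ : 9 * t₁ * (s ^ 2 + 3 * t ^ 2) = z ^ 3 :=
    mul_left_cancel₀ hpZ.ne_zero (by rw [← h, ht₁]; ring)
  have hcop : IsCoprime (9 * t₁) (s ^ 2 + 3 * t ^ 2) := by
    have h3 : IsCoprime 3 (s ^ 2 + 3 * t ^ 2) := Int.prime_three.coprime_iff_not_dvd.2 fun h3 =>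
      hs₃ (Int.prime_three.dvd_of_dvd_pow (n := 2) ((dvd_add_left (dvd_mul_right 3 _)).1 h3))
    have ht := (hst.symm.pow_right (n := 2)).add_mul_left_right (3 * t)
    rw [show s ^ 2 + t * (3 * t) = s ^ 2 + 3 * t ^ 2 by ring] at ht
    exact (show (9 : ℤ) = 3 ^ 2 by norm_num) ▸ h3.pow_left.mul_left
      (ht.of_isCoprime_of_dvd_left ⟨p, by rw [ht₁]; ring⟩)
  obtain ⟨u, v, hu, hv, hzuv⟩ := Int.exists_eq_mul_of_mul_eq_cube hcop h₁
  obtain ⟨u₁, rfl⟩ : 3 ∣ u := Int.prime_three.dvd_of_dvd_pow (n := 3) ⟨3 * t₁, by rw [← hu]; ring⟩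
  rw [mul_assoc, mul_left_comm] at hzuv
  have ht₁' : t₁ = 3 * u₁ ^ 3 := by linarith
  have hu₁ : u₁ ≠ 0 := by rintro rfl; simp [hzuv] at hz
  have hv₀ : v ≠ 0 := by rintro rfl; simp [hzuv] at hz
  obtain ⟨m, n, hmn, hmn₂, -, htn⟩ := exists_eq_of_sq_add_three_mul_sq_eq_cube hst hst₂ hv
  obtain ⟨x, y, c, hxy, hc, hcu⟩ := exists_solution_of_mul_mul_eq_mul_cube hp hmod (w := -u₁)
    (X := n) (Y := m + n) (W := n - m)
    (by simpa [add_comm] using hmn.symm.add_mul_left_right 1)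
    (by simpa [sub_eq_add_neg, add_comm] using hmn.symm.neg_right.add_mul_left_right 1)
    (by simpa [add_comm] using (hmn.symm.sub_add (by rwa [add_comm])).symm)
    (by ring) (mul_left_cancel₀ (three_ne_zero' ℤ)
      (by linear_combination htn - ht₁ - (p : ℤ) * ht₁')) (neg_ne_zero.2 hu₁)
  refine ⟨x, y, c, hxy, hc, hcu.trans_lt ?_⟩
  rw [Int.natAbs_neg]
  exact Int.natAbs_lt_natAbs_of_eq_mul hzuv hu₁ (by omega)

lemma exists_smaller_solution_of_isCoprime {p : ℕ} (hp : p.Prime) (hodd : Odd p)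
    (hmod : p % 9 = 5) {x y z : ℤ} (hxy : IsCoprime x y) (h : x ^ 3 + y ^ 3 = 2 * p * z ^ 3)
    (hz : z ≠ 0) :
    ∃ x' y' z' : ℤ, x' ^ 3 + y' ^ 3 = 2 * p * z' ^ 3 ∧ z' ≠ 0 ∧ z'.natAbs < z.natAbs := by
  have hx : Odd x := by
    by_contra hx
    rw [Int.not_odd_iff_even] at hx
    have hy : Even y := by
      have : Even (x ^ 3 + y ^ 3) := h ▸ ⟨p * z ^ 3, by ring⟩
      simpa [parity_simps, hx] using this
    exact Int.prime_two.not_isUnit (hxy.isUnit_of_dvd' hx.two_dvd hy.two_dvd)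
  obtain ⟨r, hr⟩ : Even (x + y) := by
    have : Even (x ^ 3 + y ^ 3) := h ▸ ⟨p * z ^ 3, by ring⟩
    simpa [parity_simps] using this
  obtain ⟨s, rfl⟩ : ∃ s, x = r + s := ⟨x - r, by ring⟩
  obtain rfl : y = r - s := by omega
  have hrs : IsCoprime r s := by
    obtain ⟨u, w, huw⟩ := hxy
    exact ⟨u + w, u - w, by linear_combination huw⟩
  have h' : r * (r ^ 2 + 3 * s ^ 2) = p * z ^ 3 := by linarith
  by_cases hr₃ : 3 ∣ r
  · obtain ⟨t, rfl⟩ := hr₃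
    refine exists_smaller_solution_of_three_dvd hp hodd hmod hrs.symm.of_mul_right_right ?_ ?_
      (by linear_combination h') hz
    · rw [show s + t = 3 * t + s - 2 * t by ring]; exact hx.sub_even (even_two_mul t)
    · exact fun hs₃ => Int.prime_three.not_isUnit (hrs.isUnit_of_dvd' (dvd_mul_right 3 t) hs₃)
  · exact exists_smaller_solution_of_not_three_dvd hp hodd hmod hrs hx hr₃ h' hz

lemma exists_smaller_solution_of_not_isCoprime {p : ℕ} (hp : p.Prime) (hodd : Odd p) {x y z : ℤ}
    (hxy : ¬ IsCoprime x y) (h : x ^ 3 + y ^ 3 = 2 * p * z ^ 3) (hz : z ≠ 0) :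
    ∃ x' y' z' : ℤ, x' ^ 3 + y' ^ 3 = 2 * p * z' ^ 3 ∧ z' ≠ 0 ∧ z'.natAbs < z.natAbs := by
  obtain ⟨q, hq, hqx, hqy⟩ : ∃ q : ℤ, Prime q ∧ q ∣ x ∧ q ∣ y := by
    by_contra! hno
    refine hxy (isCoprime_of_prime_dvd ?_ hno)
    rintro ⟨rfl, rfl⟩
    simp [hp.ne_zero, hz] at h
  have hqz : q ∣ z := by
    by_contra hqz
    have hq₃ : q ^ 3 ∣ 2 * p := (hq.coprime_iff_not_dvd.2 hqz).pow.dvd_of_dvd_mul_right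
      (h ▸ dvd_add (pow_dvd_pow_of_dvd hqx 3) (pow_dvd_pow_of_dvd hqy 3))
    refine hp.cubeFree_two_mul hodd q.natAbs (Int.prime_iff_natAbs_prime.1 hq) ?_
    rw [← Int.natAbs_pow]
    exact_mod_cast Int.natAbs_dvd_natAbs.2 hq₃
  obtain ⟨x', rfl⟩ := hqx
  obtain ⟨y', rfl⟩ := hqy
  obtain ⟨z', rfl⟩ := hqz
  have hz' := right_ne_zero_of_mul hz
  refine ⟨x', y', z', mul_left_cancel₀ (pow_ne_zero 3 hq.ne_zero) (by linear_combination h), hz',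
    Int.natAbs_lt_natAbs_of_eq_mul (mul_comm q z') hz' (Int.prime_iff_natAbs_prime.1 hq).two_le⟩

lemma exists_smaller_solution {p : ℕ} (hp : p.Prime) (hodd : Odd p) (hmod : p % 9 = 5)
    {x y z : ℤ} (h : x ^ 3 + y ^ 3 = 2 * p * z ^ 3) (hz : z ≠ 0) :
    ∃ x' y' z' : ℤ, x' ^ 3 + y' ^ 3 = 2 * p * z' ^ 3 ∧ z' ≠ 0 ∧ z'.natAbs < z.natAbs := by
  by_cases hxy : IsCoprime x y
  · exact exists_smaller_solution_of_isCoprime hp hodd hmod hxy h hz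
  · exact exists_smaller_solution_of_not_isCoprime hp hodd hxy h hz

lemma eq_zero_of_cube_add_cube_eq {p : ℕ} (hp : p.Prime) (hodd : Odd p) (hmod : p % 9 = 5)
    {x y z : ℤ} (h : x ^ 3 + y ^ 3 = 2 * p * z ^ 3) : z = 0 := by
  induction hN : z.natAbs using Nat.strong_induction_on generalizing x y z with
  | _ N ih =>
    by_contra hz
    obtain ⟨x', y', z', h', hz', hlt⟩ := exists_smaller_solution hp hodd hmod h hz
    exact hz' (ih _ (hN ▸ hlt) h' rfl)

lemma Rat.exists_int_cube_add_cube_eq {a b r : ℚ} (h : a ^ 3 + b ^ 3 = r) :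
    ∃ x y z : ℤ, z ≠ 0 ∧ (x : ℚ) ^ 3 + (y : ℚ) ^ 3 = r * (z : ℚ) ^ 3 := by
  refine ⟨a.num * b.den, b.num * a.den, a.den * b.den, by positivity, ?_⟩
  rw [← h]
  push_cast
  rw [← Rat.mul_den_eq_num a, ← Rat.mul_den_eq_num b]
  ring

/-- If `p` is an odd prime with `p ≡ 5 (mod 9)`, then `2p` is not a cube sum. -/
theorem not_isCubeSum_two_mul_of_five_mod_nine (p : ℕ) (hp : p.Prime) (hodd : Odd p)
    (hmod : p % 9 = 5) : ¬ IsCubeSum (2 * (p : ℚ)) := by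
  rintro ⟨a, b, -, -, hab⟩
  obtain ⟨x, y, z, hz, h⟩ := Rat.exists_int_cube_add_cube_eq hab
  exact hz (eq_zero_of_cube_add_cube_eq hp hodd hmod (by exact_mod_cast h))
end

section
/- Let p₁, …, p_k be distinct odd primes each congruent to 2 or 5 modulo 9, let K = ℚ(ω) with ω a primitive third root of unity, and let L = K(∛p₁, …, ∛p_k) be the field obtained from K by adjoining a cube root of each pᵢ (inside a fixed algebraic closure of ℚ). If P is an L-point of the elliptic curve E : y² = x³ + 1 whose order is finite and a power of 3, then P is one of the three points O, (0, 1), (0, −1); in particular every 3-power torsion point of E(L) is defined over K. -/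
/-!
The map `φ (x, y) = (ω²x, y)` is an automorphism of `E` with `φ² + φ + 1 = 0`, so `π = 1 - φ`
satisfies `π² = -3φ` and every `3`-power torsion point is killed by a power of `π`. The kernel of
`π` is `{O, (0, ±1)}`, and if `P = (x, y)` with `x ≠ 0` has `πP` in that kernel, then the
`x`-coordinate of `P - φP` vanishes, which forces `x³ = -4`: then `x² / 2` is a cube root of `2`.

So it suffices that `2` is not a cube in `L`. Adjoin the cube roots `∛pᵢ` one at a time: by
Kummer theory, a rational number that becomes a cube in `M(∛a)` is a cube of `M` times a power
of `a` (or, if `a` is already a cube in `M`, the extension has degree at most `2` and creates no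
new cubes). Since every `pᵢ` is odd, the rational cubes of `L` all have `2`-adic valuation
divisible by `3`; adjoining `ω` has degree at most `2` as well.
-/

/-- The elliptic curve `y² = x³ + 1` over a field `K`, as a Weierstrass curve in affine form. -/
def cubeCurve (K : Type*) [Field K] : WeierstrassCurve.Affine K :=
  { a₁ := 0, a₂ := 0, a₃ := 0, a₄ := 0, a₆ := 1 }

open Polynomial IntermediateField

section Cubes

variable {F E : Type*} [Field F] [Field E] [Algebra F E]

theorem exists_pow_three_eq_of_not_three_dvd_finrank [FiniteDimensional F E]
    (h3 : ¬ 3 ∣ Module.finrank F E) {b : F} {β : E} (hβ : β ^ 3 = algebraMap F E b) :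
    ∃ r : F, r ^ 3 = b := by
  by_contra! hb
  have hmin : minpoly F β = X ^ 3 - C b :=
    (minpoly.eq_of_irreducible_of_monic (X_pow_sub_C_irreducible_of_prime Nat.prime_three hb)
      (by simp [hβ]) (monic_X_pow_sub_C b three_ne_zero)).symm
  exact h3 (by simpa [hmin] using minpoly.degree_dvd (IsIntegral.of_finite F β))

/-- When `α³ = a`, the two sums in the hypotheses are `1/3` of the coefficients of `α` and `α²` in
`(u + vα + wα²)³`, and the left side of the conclusion is its constant coefficient. -/
theorem exists_eq_pow_three_mul_pow_of_cube_coeffs {a u v w : F} (ha : ∀ r : F, r ^ 3 ≠ a)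
    (h₁ : u ^ 2 * v + a * u * w ^ 2 + a * v ^ 2 * w = 0)
    (h₂ : u ^ 2 * w + u * v ^ 2 + a * v * w ^ 2 = 0) :
    ∃ r : F, ∃ j < 3, u ^ 3 + a * v ^ 3 + a ^ 2 * w ^ 3 + 6 * a * u * v * w = r ^ 3 * a ^ j := by
  have ha0 : a ≠ 0 := fun h => ha 0 (by rw [h]; ring)
  rcases mul_eq_zero.mp (show u * (v ^ 3 - a * w ^ 3) = 0 by linear_combination v * h₂ - w * h₁)
    with rfl | hvw
  · have : a * v ^ 2 * w = 0 := by linear_combination h₁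
    rcases mul_eq_zero.mp this with hv | rfl
    · obtain rfl : v = 0 := by simpa [ha0] using hv
      exact ⟨w, 2, by norm_num, by ring⟩
    · exact ⟨v, 1, by norm_num, by ring⟩
  · by_cases hw : w = 0
    · obtain rfl : v = 0 := by simpa [hw] using hvw
      exact ⟨u, 0, by norm_num, by rw [hw]; ring⟩
    · exact absurd (by field_simp; linear_combination hvw) (ha (v / w))

section DegreeThree

variable {α : E} (hdeg : (minpoly F α).natDegree = 3)
include hdeg

theorem eq_zero_of_natDegree_minpoly_eq_three {c₀ c₁ c₂ : F}
    (h : algebraMap F E c₀ + algebraMap F E c₁ * α + algebraMap F E c₂ * α ^ 2 = 0) :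
    c₀ = 0 ∧ c₁ = 0 ∧ c₂ = 0 := by
  have hli := linearIndependent_pow (K := F) α
  rw [hdeg] at hli
  have := Fintype.linearIndependent_iff.mp hli ![c₀, c₁, c₂]
    (by simpa [Fin.sum_univ_three, Algebra.smul_def] using h)
  exact ⟨this 0, this 1, this 2⟩

theorem exists_eq_of_mem_adjoin_of_natDegree_minpoly_eq_three {β : E} (hβ : β ∈ F⟮α⟯) :
    ∃ u v w : F, β = algebraMap F E u + algebraMap F E v * α + algebraMap F E w * α ^ 2 := by
  have hint : IsIntegral F α := by
    by_contra h
    rw [minpoly.eq_zero h, natDegree_zero] at hdeg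
    exact absurd hdeg (by norm_num)
  obtain ⟨f, hf, hfβ⟩ := (adjoin.powerBasis hint).exists_eq_aeval ⟨β, hβ⟩
  rw [adjoin.powerBasis_dim, hdeg] at hf
  have := congrArg Subtype.val hfβ
  rw [adjoin.powerBasis_gen, AdjoinSimple.coe_aeval_gen_apply, aeval_eq_sum_range' hf] at this
  exact ⟨f.coeff 0, f.coeff 1, f.coeff 2, by simpa [Finset.sum_range_succ, Algebra.smul_def]⟩

end DegreeThree

theorem exists_eq_pow_three_mul_pow_of_mem_adjoin [NeZero (3 : F)] {a b : F}
    (ha : ∀ r : F, r ^ 3 ≠ a) {α β : E} (hα : α ^ 3 = algebraMap F E a) (hβ : β ∈ F⟮α⟯)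
    (hb : β ^ 3 = algebraMap F E b) : ∃ r : F, ∃ j < 3, b = r ^ 3 * a ^ j := by
  have hdeg : (minpoly F α).natDegree = 3 := by
    rw [← minpoly.eq_of_irreducible_of_monic (X_pow_sub_C_irreducible_of_prime Nat.prime_three ha)
      (by simp [hα]) (monic_X_pow_sub_C a three_ne_zero), natDegree_X_pow_sub_C]
  obtain ⟨u, v, w, rfl⟩ := exists_eq_of_mem_adjoin_of_natDegree_minpoly_eq_three hdeg hβ
  obtain ⟨h₀, h₁, h₂⟩ := eq_zero_of_natDegree_minpoly_eq_three hdeg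
    (c₀ := u ^ 3 + a * v ^ 3 + a ^ 2 * w ^ 3 + 6 * a * u * v * w - b)
    (c₁ := 3 * (u ^ 2 * v + a * u * w ^ 2 + a * v ^ 2 * w))
    (c₂ := 3 * (u ^ 2 * w + u * v ^ 2 + a * v * w ^ 2)) (by
      simp only [map_add, map_sub, map_mul, map_pow, map_ofNat]
      rw [← hb]
      set A := algebraMap F E a
      set U := algebraMap F E u
      set V := algebraMap F E v
      set W := algebraMap F E w
      linear_combination (-(V ^ 3 + 6 * U * V * W + W ^ 3 * (α ^ 3 + A)
        + 3 * W * (U * W + V ^ 2) * α + 3 * V * W ^ 2 * α ^ 2)) * hα)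
  obtain ⟨r, j, hj, hr⟩ := exists_eq_pow_three_mul_pow_of_cube_coeffs ha
    ((mul_eq_zero.mp h₁).resolve_left three_ne_zero)
    ((mul_eq_zero.mp h₂).resolve_left three_ne_zero)
  exact ⟨r, j, hj, by linear_combination hr - h₀⟩

end Cubes

section RatCubes

variable {L : Type*} [Field L] [Algebra ℚ L]

def RatCubesPadicValDvd (ℓ : ℕ) (M : IntermediateField ℚ L) : Prop :=
  ∀ q : ℚ, ∀ t ∈ M, t ^ 3 = algebraMap ℚ L q → (3 : ℤ) ∣ padicValRat ℓ q

namespace RatCubesPadicValDvd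

variable {ℓ : ℕ}

theorem bot [Fact ℓ.Prime] : RatCubesPadicValDvd ℓ (⊥ : IntermediateField ℚ L) := by
  rintro q t ht htq
  obtain ⟨r, rfl⟩ := mem_bot.mp ht
  rw [← map_pow, (algebraMap ℚ L).injective.eq_iff] at htq
  rw [← htq, padicValRat.pow]
  exact ⟨_, rfl⟩

section Adjoin

variable {M : IntermediateField ℚ L} (hM : RatCubesPadicValDvd ℓ M)
include hM

theorem restrictScalars_of_not_three_dvd_finrank (N : IntermediateField M L)
    [FiniteDimensional M N] (h3 : ¬ 3 ∣ Module.finrank M N) :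
    RatCubesPadicValDvd ℓ (N.restrictScalars ℚ) := by
  intro q t ht htq
  obtain ⟨r, hr⟩ := exists_pow_three_eq_of_not_three_dvd_finrank h3
    (β := (⟨t, ht⟩ : N)) (b := algebraMap ℚ M q) (Subtype.ext (by simpa using htq))
  exact hM q r r.2 (by simpa using congrArg (algebraMap M L) hr)

theorem adjoin_of_quadratic {α : L} {b c : M} (h : α ^ 2 + b * α + c = 0) :
    RatCubesPadicValDvd ℓ (M⟮α⟯.restrictScalars ℚ) := by
  have hmonic : (X ^ 2 + C b * X + C c).Monic := by monicity!
  have hint : IsIntegral M α := ⟨_, hmonic, by simpa using h⟩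
  have := adjoin.finiteDimensional hint
  refine hM.restrictScalars_of_not_three_dvd_finrank _ ?_
  have hle : (minpoly M α).natDegree ≤ 2 := by
    refine (natDegree_le_natDegree (minpoly.min M α hmonic (by simpa using h))).trans ?_
    compute_degree
  have hpos := minpoly.natDegree_pos hint
  rw [adjoin.finrank hint]
  omega

theorem adjoin_cubeRoot [Fact ℓ.Prime] {α : L} {a : ℚ} (hα : α ^ 3 = algebraMap ℚ L a)
    (ha : padicValRat ℓ a = 0) : RatCubesPadicValDvd ℓ (M⟮α⟯.restrictScalars ℚ) := by
  by_cases hcube : ∃ r : M, r ^ 3 = algebraMap ℚ M a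
  · obtain ⟨r, hr⟩ := hcube
    have hr' : (r : L) ^ 3 = algebraMap ℚ L a := by simpa using congrArg (algebraMap M L) hr
    rcases mul_eq_zero.mp (show (α - r) * (α ^ 2 + r * α + r ^ 2) = 0 by
      linear_combination hα - hr') with h | h
    · exact hM.adjoin_of_quadratic (b := -r - r) (c := r ^ 2)
        (by push_cast; linear_combination (α - r) * h)
    · exact hM.adjoin_of_quadratic (b := r) (c := r ^ 2) (by push_cast; linear_combination h)
  rw [not_exists] at hcube
  intro q t ht htq
  obtain ⟨r, j, -, hrj⟩ := exists_eq_pow_three_mul_pow_of_mem_adjoin hcube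
    (by simpa using hα) ht (b := algebraMap ℚ M q) (by simpa using htq)
  rcases eq_or_ne q 0 with rfl | hq
  · simp
  have ha0 : a ≠ 0 := by rintro rfl; exact hcube 0 (by simp)
  have hr : r ^ 3 = algebraMap ℚ M (q / a ^ j) := by
    rw [map_div₀, map_pow, hrj,
      mul_div_cancel_right₀ _ (pow_ne_zero _ ((map_ne_zero (algebraMap ℚ M)).mpr ha0))]
  have key := hM (q / a ^ j) r r.2 (by simpa using congrArg (algebraMap M L) hr)
  rwa [padicValRat.div hq (pow_ne_zero _ ha0), padicValRat.pow, ha, mul_zero, sub_zero] at key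

end Adjoin

theorem adjoin_cubeRoots [Fact ℓ.Prime] {S : Set L} (hS : S.Finite)
    (h : ∀ α ∈ S, ∃ a : ℚ, α ^ 3 = algebraMap ℚ L a ∧ padicValRat ℓ a = 0) :
    RatCubesPadicValDvd ℓ (adjoin ℚ S) := by
  induction S, hS using Set.Finite.induction_on with
  | empty => rw [adjoin_empty]; exact bot
  | @insert α S _ _ ih =>
    obtain ⟨a, hα, ha⟩ := h α (Set.mem_insert α S)
    rw [← Set.union_singleton, ← adjoin_adjoin_left]
    exact (ih fun β hβ => h β (Set.mem_insert_of_mem α hβ)).adjoin_cubeRoot hα ha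

theorem pow_three_ne_two (h : RatCubesPadicValDvd 2 (⊤ : IntermediateField ℚ L)) (t : L) :
    t ^ 3 ≠ 2 := by
  intro ht
  have h22 : padicValRat 2 2 = 1 := by exact_mod_cast padicValRat.self (p := 2) one_lt_two
  have := h 2 t trivial (by rw [ht, map_ofNat])
  rw [h22] at this
  norm_num at this

end RatCubesPadicValDvd

end RatCubes

namespace WeierstrassCurve.Affine

variable {F : Type*} [Field F]

/-- `W'` arises from `W` by the change of variables `(x, y) ↦ (u²x, u³y)`. -/
structure IsScaling (W W' : Affine F) (u : F) : Prop where
  ne_zero : u ≠ 0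
  a₁ : W'.a₁ = u * W.a₁
  a₂ : W'.a₂ = u ^ 2 * W.a₂
  a₃ : W'.a₃ = u ^ 3 * W.a₃
  a₄ : W'.a₄ = u ^ 4 * W.a₄
  a₆ : W'.a₆ = u ^ 6 * W.a₆

namespace IsScaling

variable {W W' : Affine F} {u : F} (h : IsScaling W W' u)
include h

theorem negY_eq (x y : F) : W'.negY (u ^ 2 * x) (u ^ 3 * y) = u ^ 3 * W.negY x y := by
  simp only [negY, h.a₁, h.a₃]
  ring

theorem addX_eq (x₁ x₂ ℓ : F) :
    W'.addX (u ^ 2 * x₁) (u ^ 2 * x₂) (u * ℓ) = u ^ 2 * W.addX x₁ x₂ ℓ := by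
  simp only [addX, h.a₁, h.a₂]
  ring

theorem addY_eq (x₁ x₂ y₁ ℓ : F) :
    W'.addY (u ^ 2 * x₁) (u ^ 2 * x₂) (u ^ 3 * y₁) (u * ℓ) = u ^ 3 * W.addY x₁ x₂ y₁ ℓ := by
  simp only [addY, negAddY, negY, addX, h.a₁, h.a₂, h.a₃]
  ring

theorem nonsingular {x y : F} (hxy : W.Nonsingular x y) :
    W'.Nonsingular (u ^ 2 * x) (u ^ 3 * y) := by
  have hu := h.ne_zero
  rw [nonsingular_iff', equation_iff'] at hxy ⊢
  simp only [h.a₁, h.a₂, h.a₃, h.a₄, h.a₆]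
  refine ⟨by linear_combination u ^ 6 * hxy.1, hxy.2.imp (fun hX => ?_) (fun hY => ?_)⟩
  · convert mul_ne_zero (pow_ne_zero 4 hu) hX using 1; ring
  · convert mul_ne_zero (pow_ne_zero 3 hu) hY using 1; ring

variable [DecidableEq F]

theorem slope_eq (x₁ x₂ y₁ y₂ : F) :
    W'.slope (u ^ 2 * x₁) (u ^ 2 * x₂) (u ^ 3 * y₁) (u ^ 3 * y₂) = u * W.slope x₁ x₂ y₁ y₂ := by
  have hu := h.ne_zero
  have hx : u ^ 2 * x₁ = u ^ 2 * x₂ ↔ x₁ = x₂ := mul_right_inj' (pow_ne_zero 2 hu)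
  simp only [slope, h.negY_eq, hx, mul_right_inj' (pow_ne_zero 3 hu)]
  split_ifs with hx₁ hy₁
  · rw [mul_zero]
  · rw [← mul_sub, h.a₁, h.a₂, h.a₄]
    rcases eq_or_ne (y₁ - W.negY x₁ y₁) 0 with hD | hD
    · simp only [hD, mul_zero, div_zero]
    · field_simp
  · have hx₁' : x₁ - x₂ ≠ 0 := sub_ne_zero.mpr hx₁
    rw [← mul_sub, ← mul_sub]
    field_simp

def pointMap : W.Point → W'.Point
  | .zero => .zero
  | .some _ _ hxy => .some _ _ (h.nonsingular hxy)

theorem pointMap_add (P Q : W.Point) : h.pointMap (P + Q) = h.pointMap P + h.pointMap Q := by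
  rcases P with _ | ⟨x₁, y₁, h₁⟩ <;> rcases Q with _ | ⟨x₂, y₂, h₂⟩
  all_goals try rfl
  have hiff : u ^ 2 * x₁ = u ^ 2 * x₂ ∧ u ^ 3 * y₁ = W'.negY (u ^ 2 * x₂) (u ^ 3 * y₂) ↔
      x₁ = x₂ ∧ y₁ = W.negY x₂ y₂ := by
    rw [h.negY_eq, mul_right_inj' (pow_ne_zero 2 h.ne_zero),
      mul_right_inj' (pow_ne_zero 3 h.ne_zero)]
  by_cases hxy : x₁ = x₂ ∧ y₁ = W.negY x₂ y₂
  · rw [Point.add_of_Y_eq hxy.1 hxy.2]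
    exact (Point.add_of_Y_eq (hiff.mpr hxy).1 (hiff.mpr hxy).2).symm
  · rw [Point.add_some hxy]
    simp only [pointMap]
    rw [Point.add_some (hiff.not.mpr hxy)]
    simp only [h.slope_eq, h.addX_eq, h.addY_eq]

def pointHom : W.Point →+ W'.Point :=
  AddMonoidHom.mk' h.pointMap h.pointMap_add

end IsScaling

end WeierstrassCurve.Affine

open WeierstrassCurve.Affine

theorem IsPrimitiveRoot.sq_add_self_add_one {R : Type*} [CommRing R] [IsDomain R] {ω : R}
    (hω : IsPrimitiveRoot ω 3) : ω ^ 2 + ω + 1 = 0 := by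
  have := hω.geom_sum_eq_zero (by norm_num)
  simp only [Finset.sum_range_succ, Finset.sum_range_zero] at this
  linear_combination this

theorem IsPrimitiveRoot.sq_mul_eq_self_iff {R : Type*} [CommRing R] [IsDomain R] {ω : R}
    (hω : IsPrimitiveRoot ω 3) {x : R} : ω ^ 2 * x = x ↔ x = 0 := by
  have hω2 : ω ^ 2 - 1 ≠ 0 :=
    sub_ne_zero.mpr (hω.pow_ne_one_of_pos_of_lt two_ne_zero (by norm_num))
  refine ⟨fun h => ?_, fun h => by rw [h, mul_zero]⟩
  exact (mul_eq_zero.mp (show (ω ^ 2 - 1) * x = 0 by linear_combination h)).resolve_left hω2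

section CubeCurve

variable {L : Type*} [Field L]

theorem cubeCurve_isScaling {ω : L} (hω : ω ^ 3 = 1) :
    (cubeCurve L).IsScaling (cubeCurve L) ω where
  ne_zero := by rintro rfl; norm_num at hω
  a₁ := by simp [cubeCurve]
  a₂ := by simp [cubeCurve]
  a₃ := by simp [cubeCurve]
  a₄ := by simp [cubeCurve]
  a₆ := by simp [cubeCurve, show ω ^ 6 = (ω ^ 3) ^ 2 by ring, hω]

theorem cubeCurve_equation_iff {x y : L} : (cubeCurve L).Equation x y ↔ y ^ 2 = x ^ 3 + 1 := by
  simp [equation_iff, cubeCurve]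

variable [DecidableEq L] {ω : L} (hω : IsPrimitiveRoot ω 3)

/-- The automorphism `(x, y) ↦ (ω²x, ω³y) = (ω²x, y)` of `y² = x³ + 1`. -/
def cubeCurveRot : AddMonoid.End (cubeCurve L).Point :=
  (cubeCurve_isScaling hω.pow_eq_one).pointHom

theorem cubeCurveRot_some {x y : L} (h : (cubeCurve L).Nonsingular x y) :
    cubeCurveRot hω (.some x y h) =
      .some _ _ ((cubeCurve_isScaling hω.pow_eq_one).nonsingular h) :=
  rfl

include hω

theorem add_cubeCurveRot (P : (cubeCurve L).Point) :
    P + cubeCurveRot hω P = -cubeCurveRot hω (cubeCurveRot hω P) := by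
  have hω3 := hω.pow_eq_one
  rcases P with _ | ⟨x, y, h⟩
  · rfl
  have hxy : ¬(x = ω ^ 2 * x ∧ y = (cubeCurve L).negY (ω ^ 2 * x) (ω ^ 3 * y)) := by
    rintro ⟨hx, hy⟩
    rw [eq_comm, hω.sq_mul_eq_self_iff] at hx
    subst hx
    rcases ((nonsingular_iff _ _).mp h).2 with h' | h'
    · simp [cubeCurve] at h'
    · simp only [cubeCurve, negY, hω3] at hy h'
      exact h' (by linear_combination hy)
  have hℓ : (cubeCurve L).slope x (ω ^ 2 * x) y (ω ^ 3 * y) = 0 := by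
    by_cases hx : x = ω ^ 2 * x
    · rw [eq_comm, hω.sq_mul_eq_self_iff] at hx
      subst hx
      unfold WeierstrassCurve.Affine.slope
      split_ifs <;> simp [cubeCurve]
    · rw [slope_of_X_ne hx, hω3, one_mul, sub_self, zero_div]
  rw [cubeCurveRot_some, cubeCurveRot_some, Point.add_some hxy, Point.neg_some]
  simp only [Point.some.injEq, addY, negAddY, hℓ]
  simp only [cubeCurve, addX, negY]
  constructor
  · linear_combination (-x) * hω.sq_add_self_add_one - x * ω * hω3
  · linear_combination ((ω ^ 3 + 1) * y) * hω3

theorem cubeCurveRot_mul_self_add_self_add_one :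
    cubeCurveRot hω * cubeCurveRot hω + cubeCurveRot hω + 1 = 0 := by
  ext P
  change cubeCurveRot hω (cubeCurveRot hω P) + cubeCurveRot hω P + P = 0
  rw [← neg_add_cancel (cubeCurveRot hω (cubeCurveRot hω P)), ← add_cubeCurveRot hω P]
  abel

theorem one_sub_cubeCurveRot_sq : (1 - cubeCurveRot hω) ^ 2 = -cubeCurveRot hω * 3 := by
  rw [← sub_eq_zero, ← cubeCurveRot_mul_self_add_self_add_one hω,
    show (3 : AddMonoid.End (cubeCurve L).Point) = 1 + 1 + 1 by norm_num]
  simp only [sq, sub_mul, mul_sub, mul_add, one_mul, mul_one]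
  abel

theorem one_sub_cubeCurveRot_pow_apply_eq_zero {m : ℕ} {P : (cubeCurve L).Point}
    (hP : 3 ^ m • P = 0) : ((1 - cubeCurveRot hω) ^ (2 * m)) P = 0 := by
  rw [pow_mul, one_sub_cubeCurveRot_sq, (Commute.ofNat_right _ 3).mul_pow,
    AddMonoid.End.coe_mul, Function.comp_apply, ← Nat.cast_ofNat, ← Nat.cast_pow,
    AddMonoid.End.natCast_apply, hP, map_zero]

theorem one_sub_cubeCurveRot_apply (P : (cubeCurve L).Point) :
    (1 - cubeCurveRot hω) P = P - cubeCurveRot hω P :=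
  rfl

theorem one_sub_cubeCurveRot_apply_eq_zero_iff {P : (cubeCurve L).Point} :
    (1 - cubeCurveRot hω) P = 0 ↔ P = 0 ∨ ∃ y h, P = .some 0 y h := by
  rw [one_sub_cubeCurveRot_apply, sub_eq_zero]
  rcases P with _ | ⟨x, y, h⟩
  · exact iff_of_true (map_zero _).symm (Or.inl rfl)
  · simp [cubeCurveRot_some, hω.pow_eq_one, eq_comm (a := x), hω.sq_mul_eq_self_iff]
    rintro rfl
    exact h

theorem one_sub_cubeCurveRot_apply_eq_zero_of_sq (h2 : ∀ t : L, t ^ 3 ≠ 2)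
    {P : (cubeCurve L).Point} (hP : ((1 - cubeCurveRot hω) ^ 2 : AddMonoid.End _) P = 0) :
    (1 - cubeCurveRot hω) P = 0 := by
  rw [sq, AddMonoid.End.coe_mul, Function.comp_apply,
    one_sub_cubeCurveRot_apply_eq_zero_iff] at hP
  rcases P with _ | ⟨x, y, h⟩
  · exact map_zero _
  by_cases hx : x = 0
  · subst hx
    exact (one_sub_cubeCurveRot_apply_eq_zero_iff hω).mpr (Or.inr ⟨y, h, rfl⟩)
  have hxω : x ≠ ω ^ 2 * x := fun h' => hx (hω.sq_mul_eq_self_iff.mp h'.symm)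
  rw [one_sub_cubeCurveRot_apply, cubeCurveRot_some, sub_eq_add_neg, Point.neg_some,
    Point.add_of_X_ne hxω] at hP
  rcases hP with hP | ⟨y', h', hP⟩
  · exact absurd hP (Point.some_ne_zero _)
  have hX := (Point.some.inj hP).1
  rw [slope_of_X_ne hxω] at hX
  simp only [cubeCurve, addX, negY, hω.pow_eq_one, one_mul, zero_mul, sub_zero, add_zero] at hX
  have hxω' : x - ω ^ 2 * x ≠ 0 := sub_ne_zero.mpr hxω
  have hω2 : 1 - ω ^ 2 ≠ 0 := fun h' => hxω' (by linear_combination x * h')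
  field_simp at hX
  have hω' : (1 + ω ^ 2) * (1 - ω ^ 2) ^ 2 = 3 := by
    linear_combination (ω ^ 3 + 1 - ω) * hω.pow_eq_one - hω.sq_add_self_add_one
  have hx3 : x ^ 3 = -4 := by
    linear_combination hX + x ^ 3 * hω' - 4 * cubeCurve_equation_iff.mp h.1
  have h20 : (2 : L) ≠ 0 := fun h => h2 0 (by rw [h]; ring)
  exact (h2 (x ^ 2 / 2) (by field_simp; linear_combination (x ^ 3 - 4) * hx3)).elim

theorem one_sub_cubeCurveRot_apply_eq_zero_of_pow (h2 : ∀ t : L, t ^ 3 ≠ 2) {n : ℕ}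
    {P : (cubeCurve L).Point} (hP : ((1 - cubeCurveRot hω) ^ n : AddMonoid.End _) P = 0) :
    (1 - cubeCurveRot hω) P = 0 := by
  induction n generalizing P with
  | zero =>
    rw [pow_zero, AddMonoid.End.coe_one, id_eq] at hP
    rw [hP, map_zero]
  | succ n ih =>
    rw [pow_succ, AddMonoid.End.coe_mul, Function.comp_apply] at hP
    refine one_sub_cubeCurveRot_apply_eq_zero_of_sq hω h2 ?_
    rw [sq, AddMonoid.End.coe_mul, Function.comp_apply]
    exact ih hP

theorem cubeCurve_eq_zero_or_eq_some_zero_of_three_pow_nsmul_eq_zero (h2 : ∀ t : L, t ^ 3 ≠ 2)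
    {m : ℕ} {P : (cubeCurve L).Point} (hP : 3 ^ m • P = 0) :
    P = 0 ∨ ∃ y h, P = .some 0 y h :=
  (one_sub_cubeCurveRot_apply_eq_zero_iff hω).mp <|
    one_sub_cubeCurveRot_apply_eq_zero_of_pow hω h2 (one_sub_cubeCurveRot_pow_apply_eq_zero hω hP)

end CubeCurve

open Classical in
theorem three_power_torsion_over_genus_field_general (k : ℕ) (p : Fin k → ℕ)
    (hodd : ∀ i, Odd (p i))
    (L : Type*) [Field L] [Algebra ℚ L] (ω : L) (hω : IsPrimitiveRoot ω 3)
    (c : Fin k → L) (hc : ∀ i, c i ^ 3 = (p i : L))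
    (hgen : (⊤ : IntermediateField ℚ L) = IntermediateField.adjoin ℚ ({ω} ∪ Set.range c))
    (P : (cubeCurve L).Point) (hP : ∃ m : ℕ, 3 ^ m • P = 0) :
    P = 0 ∨ ∃ (x y : L) (h : (cubeCurve L).Nonsingular x y),
      P = WeierstrassCurve.Affine.Point.some x y h ∧ ((x, y) = (0, 1) ∨ (x, y) = (0, -1)) := by
  have hcubes : RatCubesPadicValDvd 2 (⊤ : IntermediateField ℚ L) := by
    rw [hgen, Set.union_comm, ← adjoin_adjoin_left]
    refine (RatCubesPadicValDvd.adjoin_cubeRoots (Set.finite_range c) ?_).adjoin_of_quadratic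
      (b := 1) (c := 1) (by simpa using hω.sq_add_self_add_one)
    rintro _ ⟨i, rfl⟩
    refine ⟨p i, by rw [hc i, map_natCast], ?_⟩
    rw [padicValRat.of_nat, padicValNat.eq_zero_of_not_dvd (hodd i).not_two_dvd_nat, Nat.cast_zero]
  obtain ⟨m, hm⟩ := hP
  rcases cubeCurve_eq_zero_or_eq_some_zero_of_three_pow_nsmul_eq_zero hω
      hcubes.pow_three_ne_two hm with rfl | ⟨y, h, rfl⟩
  · exact Or.inl rfl
  have hy : (y - 1) * (y + 1) = 0 := by linear_combination cubeCurve_equation_iff.mp h.1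
  rcases mul_eq_zero.mp hy with hy | hy
  · exact Or.inr ⟨0, y, h, rfl, Or.inl (by rw [sub_eq_zero.mp hy])⟩
  · exact Or.inr ⟨0, y, h, rfl, Or.inr (by rw [eq_neg_of_add_eq_zero_left hy])⟩

open Classical in
/-- Let `p₁, …, p_k` be distinct odd primes each `≡ 2, 5 (mod 9)`, and let
`L = ℚ(ω, ∛p₁, …, ∛p_k)` where `ω` is a primitive third root of unity.  Every `3`-power
torsion point of `E : y² = x³ + 1` over `L` is one of `O`, `(0, 1)`, `(0, -1)`; in
particular it is defined over `K = ℚ(ω)`. -/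
theorem three_power_torsion_over_genus_field (k : ℕ) (p : Fin k → ℕ)
    (hinj : Function.Injective p) (hp : ∀ i, (p i).Prime) (hodd : ∀ i, Odd (p i))
    (hmod : ∀ i, p i % 9 = 2 ∨ p i % 9 = 5)
    (L : Type*) [Field L] [Algebra ℚ L] (ω : L) (hω : IsPrimitiveRoot ω 3)
    (c : Fin k → L) (hc : ∀ i, c i ^ 3 = (p i : L))
    (hgen : (⊤ : IntermediateField ℚ L) = IntermediateField.adjoin ℚ ({ω} ∪ Set.range c))
    (P : (cubeCurve L).Point) (hP : ∃ m : ℕ, 3 ^ m • P = 0) :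
    P = 0 ∨ ∃ (x y : L) (h : (cubeCurve L).Nonsingular x y),
      P = WeierstrassCurve.Affine.Point.some x y h ∧ ((x, y) = (0, 1) ∨ (x, y) = (0, -1)) :=
  three_power_torsion_over_genus_field_general k p hodd L ω hω c hc hgen P hP
end
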